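/- Let $g$ be a left-continuous distortion function and $X$ a bounded random variable with distribution function $F_X$ and lower quantile function $q_X(u) = \inf\{x : F_X(x) \ge u\}$. Then the distortion risk measure satisfies $\rho_g(X) = \int_{[0,1]} q_X(1-u)\, dg(u) = \int_{[0,1]} q_X(u)\, d\bar g(u)$, where $\bar g(u) = 1 - g(1-u)$ and the integrals are Lebesgue–Stieltjes integrals with respect to the measure induced by $g$ (resp. $\bar g$). -/

import Mathlib

/-!
On `(0, 1]` the lower quantile `q` of the distribution function `F` of `X` is the left adjoint of
`F`: `q u ≤ x ↔ u ≤ F x`. Hence `{u ∈ (0, 1] | x < q u} = (F x, 1]`, whose `dḡ`-measure is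
`ḡ 1 - ḡ (F x) = g (1 - F x) = g (P (X > x))`. The signed layer-cake formula for the bounded
function `q` against the probability measure `dḡ` on `(0, 1]` turns `∫ q dḡ` into exactly the two
integrals defining `ρ_g(X)`. Reflecting `u ↦ 1 - u` gives the form with `dg`.
-/

open MeasureTheory

noncomputable def distortionRM {Ω : Type*} [MeasurableSpace Ω]
    (P : Measure Ω) (g : ℝ → ℝ) (X : Ω → ℝ) : ℝ :=
  (∫ x in Set.Iic (0:ℝ), (g ((P {ω | x < X ω}).toReal) - 1)) +
  ∫ x in Set.Ioi (0:ℝ), g ((P {ω | x < X ω}).toReal)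

open Set Filter Topology ProbabilityTheory

theorem setIntegral_Ioi_eq_intervalIntegral_of_eq_zero {φ : ℝ → ℝ} {a b : ℝ} (hab : a ≤ b)
    (hφ : ∀ t, b ≤ t → φ t = 0) : ∫ t in Ioi a, φ t = ∫ t in a..b, φ t := by
  rw [intervalIntegral.integral_of_le hab,
    setIntegral_eq_of_subset_of_forall_sdiff_eq_zero measurableSet_Ioi Ioc_subset_Ioi_self]
  rintro t ⟨hat, htb⟩
  exact hφ t (le_of_lt (not_le.1 fun h => htb ⟨hat, h⟩))

theorem setIntegral_Iic_eq_intervalIntegral_of_eq_zero {φ : ℝ → ℝ} {a b : ℝ} (hab : a ≤ b)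
    (hφ : ∀ t < a, φ t = 0) : ∫ t in Iic b, φ t = ∫ t in a..b, φ t := by
  rw [intervalIntegral.integral_of_le hab, ← integral_Icc_eq_integral_Ioc,
    setIntegral_eq_of_subset_of_forall_sdiff_eq_zero measurableSet_Iic Icc_subset_Iic_self]
  rintro t ⟨htb, hta⟩
  exact hφ t (not_le.1 fun h => hta ⟨h, htb⟩)

theorem integral_eq_integral_Iic_add_integral_Ioi_of_abs_le {α : Type*} [MeasurableSpace α]
    {ν : Measure α} [IsProbabilityMeasure ν] {f : α → ℝ} (hf : AEStronglyMeasurable f ν) {C : ℝ}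
    (hC : ∀ᵐ a ∂ν, |f a| ≤ C) :
    ∫ a, f a ∂ν =
      (∫ t in Iic 0, (ν.real {a | t < f a} - 1)) + ∫ t in Ioi 0, ν.real {a | t < f a} := by
  set φ : ℝ → ℝ := fun t => ν.real {a | t < f a}
  have hC0 : 0 ≤ C := hC.exists.elim fun a ha => (abs_nonneg _).trans ha
  have hφ_anti : Antitone φ := fun s t hst => measureReal_mono fun a ha => hst.trans_lt ha
  have hφ_lo : ∀ t < -C, φ t = 1 := by
    intro t ht
    have : ∀ᵐ a ∂ν, t < f a := by
      filter_upwards [hC] with a ha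
      linarith [neg_abs_le (f a)]
    exact (measureReal_congr (eventuallyEq_univ.2 this)).trans probReal_univ
  have hφ_hi : ∀ t, C ≤ t → φ t = 0 := by
    intro t ht
    rw [measureReal_eq_zero_iff, measure_eq_zero_iff_ae_notMem]
    filter_upwards [hC] with a ha
    exact not_lt.2 (by linarith [le_abs_self (f a)])
  have hneg : ∫ t in Iic 0, (φ t - 1) = (∫ t in -C..0, φ t) - C := by
    rw [setIntegral_Iic_eq_intervalIntegral_of_eq_zero (neg_nonpos.2 hC0)
      (fun t ht => by rw [hφ_lo t ht, sub_self]),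
      intervalIntegral.integral_sub hφ_anti.intervalIntegrable intervalIntegrable_const]
    simp
  have hint : Integrable f ν :=
    Integrable.of_bound hf C (hC.mono fun a ha => by rwa [Real.norm_eq_abs])
  have hshift : ∫ a, f a ∂ν + C = ∫ t in -C..C, φ t := by
    have hmean : ∫ a, (f a + C) ∂ν = ∫ a, f a ∂ν + C := by
      simp [integral_add hint (integrable_const C)]
    have hintC : Integrable (fun a => f a + C) ν := hint.add (integrable_const C)
    rw [← hmean, hintC.integral_eq_integral_meas_lt
      (hC.mono fun a ha => show 0 ≤ f a + C by linarith [neg_abs_le (f a)])]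
    simp only [← sub_lt_iff_lt_add]
    rw [setIntegral_Ioi_eq_intervalIntegral_of_eq_zero (b := 2 * C) (by linarith)
      (fun t ht => hφ_hi _ (by linarith)), intervalIntegral.integral_comp_sub_right]
    ring_nf
  have hsplit : ∫ t in -C..C, φ t = (∫ t in -C..0, φ t) + ∫ t in 0..C, φ t :=
    (intervalIntegral.integral_add_adjacent_intervals hφ_anti.intervalIntegrable
      hφ_anti.intervalIntegrable).symm
  change _ = (∫ t in Iic 0, (φ t - 1)) + ∫ t in Ioi 0, φ t
  rw [hneg, setIntegral_Ioi_eq_intervalIntegral_of_eq_zero hC0 hφ_hi]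
  linarith

noncomputable def lowerQuantile (F : ℝ → ℝ) (u : ℝ) : ℝ := sInf {x | u ≤ F x}

namespace StieltjesFunction

theorem lowerQuantile_le_iff (F : StieltjesFunction ℝ) {u : ℝ} (hne : ∃ x, u ≤ F x)
    (hbdd : BddBelow {x | u ≤ F x}) {x : ℝ} : lowerQuantile F u ≤ x ↔ u ≤ F x := by
  refine ⟨fun h => ?_, fun h => csInf_le hbdd h⟩
  have hmem : u ≤ F (lowerQuantile F u) := by
    refine ge_of_tendsto ((F.right_continuous _).mono Ioi_subset_Ici_self) ?_
    filter_upwards [self_mem_nhdsWithin] with y hy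
    obtain ⟨z, hz, hzy⟩ := (csInf_lt_iff hbdd hne).1 hy
    exact hz.trans (F.mono hzy.le)
  exact hmem.trans (F.mono h)

theorem measure_singleton_eq_zero_of_forall_lt (σ : StieltjesFunction ℝ)
    {a : ℝ} (h : ∀ u < a, σ u = σ a) : σ.measure {a} = 0 := by
  have hlim : Function.leftLim σ a = σ a := leftLim_eq_of_tendsto <|
    tendsto_const_nhds.congr' (eventually_nhdsWithin_of_forall fun u hu => (h u hu).symm)
  rw [σ.measure_singleton, hlim, sub_self, ENNReal.ofReal_zero]

variable {F : StieltjesFunction ℝ} {C : ℝ}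

theorem nonneg_of_forall_lt_eq_zero (hF_lo : ∀ x < -C, F x = 0) (x : ℝ) : 0 ≤ F x :=
  (hF_lo _ (by linarith [min_le_right x (-C - 1)])).symm.le.trans (F.mono (min_le_left x _))

theorem le_one_of_forall_le_eq_one (hF_hi : ∀ x, C ≤ x → F x = 1) (x : ℝ) : F x ≤ 1 :=
  (F.mono (le_max_left x C)).trans (hF_hi _ (le_max_right x C)).le

theorem lowerQuantile_le_iff_of_mem_Ioc (hF_lo : ∀ x < -C, F x = 0)
    (hF_hi : ∀ x, C ≤ x → F x = 1) {u : ℝ} (hu : u ∈ Ioc 0 1) {x : ℝ} :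
    lowerQuantile F u ≤ x ↔ u ≤ F x := by
  refine F.lowerQuantile_le_iff ⟨C, (hF_hi C le_rfl).symm ▸ hu.2⟩ ⟨-C, fun y hy => ?_⟩
  by_contra! hy'
  exact absurd hy (not_le.2 ((hF_lo y hy').symm ▸ hu.1))

theorem abs_lowerQuantile_le (hF_lo : ∀ x < -C, F x = 0) (hF_hi : ∀ x, C ≤ x → F x = 1)
    {u : ℝ} (hu : u ∈ Ioc 0 1) : |lowerQuantile F u| ≤ C := by
  have hself := (lowerQuantile_le_iff_of_mem_Ioc hF_lo hF_hi hu).1 le_rfl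
  refine abs_le.2 ⟨not_lt.1 fun h => ?_, (lowerQuantile_le_iff_of_mem_Ioc hF_lo hF_hi hu).2 ?_⟩
  · exact absurd hself (not_le.2 ((hF_lo _ h).symm ▸ hu.1))
  · exact (hF_hi C le_rfl).symm ▸ hu.2

theorem monotoneOn_lowerQuantile (hF_lo : ∀ x < -C, F x = 0) (hF_hi : ∀ x, C ≤ x → F x = 1) :
    MonotoneOn (lowerQuantile F) (Ioc 0 1) := fun _ hu _ hv huv =>
  (lowerQuantile_le_iff_of_mem_Ioc hF_lo hF_hi hu).2
    (huv.trans ((lowerQuantile_le_iff_of_mem_Ioc hF_lo hF_hi hv).1 le_rfl))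

theorem setOf_lt_lowerQuantile_inter_Ioc (hF_lo : ∀ x < -C, F x = 0)
    (hF_hi : ∀ x, C ≤ x → F x = 1) (x : ℝ) :
    {u | x < lowerQuantile F u} ∩ Ioc 0 1 = Ioc (F x) 1 := by
  have hlt : ∀ u ∈ Ioc (0 : ℝ) 1, x < lowerQuantile F u ↔ F x < u := fun u hu => by
    simpa only [not_le] using (lowerQuantile_le_iff_of_mem_Ioc hF_lo hF_hi hu).not
  ext u
  refine ⟨fun ⟨hxu, hu⟩ => ⟨(hlt u hu).1 hxu, hu.2⟩, fun hu => ?_⟩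
  have hu' : u ∈ Ioc 0 1 := ⟨(nonneg_of_forall_lt_eq_zero hF_lo x).trans_lt hu.1, hu.2⟩
  exact ⟨(hlt u hu').2 hu.1, hu'⟩

theorem setIntegral_Ioc_lowerQuantile (σ : StieltjesFunction ℝ) (hσ : σ 1 - σ 0 = 1)
    (hF_lo : ∀ x < -C, F x = 0) (hF_hi : ∀ x, C ≤ x → F x = 1) :
    ∫ u in Ioc 0 1, lowerQuantile F u ∂σ.measure =
      (∫ t in Iic 0, (σ 1 - σ (F t) - 1)) + ∫ t in Ioi 0, (σ 1 - σ (F t)) := by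
  have : IsProbabilityMeasure (σ.measure.restrict (Ioc 0 1)) :=
    ⟨by rw [Measure.restrict_apply_univ, σ.measure_Ioc, hσ, ENNReal.ofReal_one]⟩
  have hlevel : ∀ t, (σ.measure.restrict (Ioc 0 1)).real {u | t < lowerQuantile F u} =
      σ 1 - σ (F t) := fun t => by
    rw [measureReal_def, Measure.restrict_apply' measurableSet_Ioc,
      setOf_lt_lowerQuantile_inter_Ioc hF_lo hF_hi, σ.measure_Ioc,
      ENNReal.toReal_ofReal (sub_nonneg.2 (σ.mono (le_one_of_forall_le_eq_one hF_hi t)))]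
  simp only [← hlevel]
  exact integral_eq_integral_Iic_add_integral_Ioi_of_abs_le
    (aemeasurable_restrict_of_monotoneOn measurableSet_Ioc
      (monotoneOn_lowerQuantile hF_lo hF_hi)).aestronglyMeasurable
    ((ae_restrict_iff' measurableSet_Ioc).2
      (Eventually.of_forall fun _ hu => abs_lowerQuantile_le hF_lo hF_hi hu))

end StieltjesFunction

namespace ProbabilityTheory

variable {Ω : Type*} [MeasurableSpace Ω] {P : Measure Ω} [IsProbabilityMeasure P] {X : Ω → ℝ}

theorem cdf_map_eq_measureReal (hX : Measurable X) (x : ℝ) :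
    cdf (P.map X) x = P.real {ω | X ω ≤ x} := by
  have := Measure.isProbabilityMeasure_map (μ := P) hX.aemeasurable
  rw [cdf_eq_real, map_measureReal_apply hX measurableSet_Iic]
  rfl

theorem measureReal_lt_eq_one_sub_cdf_map (hX : Measurable X) (x : ℝ) :
    P.real {ω | x < X ω} = 1 - cdf (P.map X) x := by
  rw [cdf_map_eq_measureReal hX,
    ← probReal_compl_eq_one_sub (measurableSet_le hX measurable_const)]
  simp only [compl_ofPred, not_le]

theorem cdf_map_of_lt_neg (hX : Measurable X) {C : ℝ} (hC : ∀ ω, |X ω| ≤ C) {x : ℝ}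
    (hx : x < -C) : cdf (P.map X) x = 0 := by
  rw [cdf_map_eq_measureReal hX, show {ω | X ω ≤ x} = ∅ from eq_empty_of_forall_notMem fun ω hω =>
    absurd hx (not_lt.2 ((neg_le_neg (hC ω)).trans ((neg_abs_le _).trans hω)))]
  simp

theorem cdf_map_of_le (hX : Measurable X) {C : ℝ} (hC : ∀ ω, |X ω| ≤ C) {x : ℝ}
    (hx : C ≤ x) : cdf (P.map X) x = 1 := by
  rw [cdf_map_eq_measureReal hX, show {ω | X ω ≤ x} = univ from eq_univ_of_forall fun ω =>
    (le_abs_self _).trans ((hC ω).trans hx)]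
  simp

end ProbabilityTheory

theorem stmt_7_general {Ω : Type*} [MeasurableSpace Ω] (P : Measure Ω) [IsProbabilityMeasure P]
    (g : ℝ → ℝ) (hg0 : g 0 = 0) (hg1 : g 1 = 1)
    (X : Ω → ℝ) (hX : Measurable X) (hXb : ∃ C, ∀ ω, |X ω| ≤ C)
    (q : ℝ → ℝ) (hq : ∀ u, q u = sInf {x : ℝ | u ≤ (P {ω | X ω ≤ x}).toReal})
    (σ : StieltjesFunction ℝ)
    (hσ : ∀ u : ℝ, σ u = if u < 0 then 0 else if u ≤ 1 then 1 - g (1 - u) else 1) :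
    distortionRM P g X =
      ∫ u in Set.Icc (0:ℝ) 1, q (1 - u) ∂(Measure.map (fun u => 1 - u) σ.measure) ∧
    distortionRM P g X = ∫ u in Set.Icc (0:ℝ) 1, q u ∂σ.measure := by
  obtain ⟨C, hC⟩ := hXb
  have hσ0 : σ 0 = 0 := by simp [hσ, hg1]
  have hσ1 : σ 1 = 1 := by simp [hσ, hg0]
  have hq_eq : q = lowerQuantile (cdf (P.map X)) := funext fun u => by
    simp only [hq, lowerQuantile, cdf_map_eq_measureReal hX, measureReal_def]
  have hlevel : ∀ x, g (P {ω | x < X ω}).toReal = σ 1 - σ (cdf (P.map X) x) := fun x => by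
    rw [← measureReal_def, measureReal_lt_eq_one_sub_cdf_map hX, hσ1, hσ (cdf (P.map X) x),
      if_neg (not_lt.2 (cdf_nonneg _ x)), if_pos (cdf_le_one _ x)]
    ring
  have hmain : distortionRM P g X = ∫ u in Icc (0:ℝ) 1, q u ∂σ.measure := by
    -- `q 0 = sInf univ = 0` is a junk value; the atomless point `0` is discarded first.
    rw [integral_Icc_eq_integral_Ioc'
        (σ.measure_singleton_eq_zero_of_forall_lt fun u hu => by simp [hσ, hu, hg1]), hq_eq,
      StieltjesFunction.setIntegral_Ioc_lowerQuantile σ (by rw [hσ0, hσ1, sub_zero])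
        (fun _ => cdf_map_of_lt_neg hX hC) (fun _ => cdf_map_of_le hX hC)]
    simp only [distortionRM, hlevel]
  refine ⟨?_, hmain⟩
  have hreflect : MeasurableEmbedding (fun u : ℝ => 1 - u) :=
    (MeasurableEquiv.subLeft (1:ℝ)).measurableEmbedding
  rw [hreflect.setIntegral_map, preimage_const_sub_Icc]
  simpa using hmain

theorem stmt_7 {Ω : Type*} [MeasurableSpace Ω] (P : Measure Ω) [IsProbabilityMeasure P]
    (g : ℝ → ℝ) (hg_mono : MonotoneOn g (Set.Icc 0 1)) (hg0 : g 0 = 0) (hg1 : g 1 = 1)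
    (hg_lc : ∀ u ∈ Set.Icc (0:ℝ) 1, ContinuousWithinAt g (Set.Iic u) u)
    (X : Ω → ℝ) (hX : Measurable X) (hXb : ∃ C, ∀ ω, |X ω| ≤ C)
    (q : ℝ → ℝ) (hq : ∀ u, q u = sInf {x : ℝ | u ≤ (P {ω | X ω ≤ x}).toReal})
    (σ : StieltjesFunction ℝ)
    (hσ : ∀ u : ℝ, σ u = if u < 0 then 0 else if u ≤ 1 then 1 - g (1 - u) else 1) :
    distortionRM P g X =
      ∫ u in Set.Icc (0:ℝ) 1, q (1 - u) ∂(Measure.map (fun u => 1 - u) σ.measure) ∧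
    distortionRM P g X = ∫ u in Set.Icc (0:ℝ) 1, q u ∂σ.measure :=
  stmt_7_general P g hg0 hg1 X hX hXb q hq σ hσ
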